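/- arXiv:1610.05862 — 11 statements merged into one kernel-verified Lean document; each statement's English description precedes it below -/
import Mathlib

section
/- Let A be an n×N matrix of compact real intervals, g : ℝ → ℝ, and G a map from compact intervals to compact intervals that is an interval extension of g, i.e. for every compact interval I (contained in the domain where G is applied below) and every y ∈ I one has g(y) ∈ G(I). Choose real central points a_i with L(A_i) ≤ a_i ≤ U(A_i) for each i, set ω = Σ_{i=1}^n a_i, and let r ≥ 0 satisfy |ρ_g(ω, δ)| ≤ r for all δ ∈ ℝ^n with L(A_i) ≤ a_i + δ_i ≤ U(A_i) for all i. Fix k ∈ {1,…,n} and define interval coefficients C_i^j = G(ω − a_i + A_i^j) − ((n−1)/n)·g(ω) for all i, j, and then replace C_k^j by C_k^j + [−r, r] for all j. Then for every choice of column indices j_1,…,j_n ∈ {1,…,N} and every choice of points y_i ∈ A_i^{j_i}, one has g(Σ_{i=1}^n y_i) ∈ Σ_{i=1}^n C_i^{j_i} (Minkowski sum of intervals). -/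
/-!
Writing `y i = a i + δ i`, the definition of the remainder `ρ = ρ_g(ω, δ)` rearranges to
`g (ω + ∑ δ) = ∑ i (g (ω + δ i) - (n-1)/n · g ω) - ρ`. The `i`-th summand lies in
`G(ω - a i + A_i^{j_i}) - (n-1)/n · g ω` because `ω + δ i ∈ ω - a i + A_i^{j_i}`, and `-ρ` lies in
`[-r, r]` because `y` is admissible for the remainder bound; charging `-ρ` to row `k` gives the claim.
-/

open Finset Pointwise

section

variable {ι : Type*} [Fintype ι]

def compositionRemainder (g : ℝ → ℝ) (ω : ℝ) (δ : ι → ℝ) : ℝ :=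
  ∑ i, g (ω + δ i) - ((Fintype.card ι : ℝ) - 1) * g ω - g (ω + ∑ i, δ i)

theorem apply_add_sum_eq_sum_add_ite_compositionRemainder [Nonempty ι] [DecidableEq ι]
    (g : ℝ → ℝ) (ω : ℝ) (δ : ι → ℝ) (k : ι) :
    g (ω + ∑ i, δ i) = ∑ i, (g (ω + δ i) - ((Fintype.card ι : ℝ) - 1) / Fintype.card ι * g ω
      + if i = k then -compositionRemainder g ω δ else 0) := by
  have hn : (Fintype.card ι : ℝ) ≠ 0 := by positivity
  simp only [sum_add_distrib, sum_sub_distrib, sum_ite_eq', mem_univ, if_true, sum_const,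
    card_univ, nsmul_eq_mul, compositionRemainder]
  field_simp
  ring

end

theorem Set.add_ite_mem_add_ite {α : Type*} [AddZeroClass α] {s u : Set α} {a c : α}
    {P : Prop} [Decidable P] (ha : a ∈ s) (hc : P → c ∈ u) :
    a + (if P then c else 0) ∈ s + (if P then u else 0) := by
  split_ifs with hP
  · exact Set.add_mem_add ha (hc hP)
  · simpa using ha

theorem stmt1_general {ι κ : Type*} [Fintype ι] [DecidableEq ι] [Fintype κ] [Nonempty ι] [Nonempty κ]
    (Al Au : ι → κ → ℝ)
    (L U : ι → ℝ)
    (hL : ∀ i, L i = univ.inf' univ_nonempty (Al i))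
    (hU : ∀ i, U i = univ.sup' univ_nonempty (Au i))
    (g : ℝ → ℝ) (G : ℝ × ℝ → ℝ × ℝ)
    (hG : ∀ p : ℝ × ℝ, p.1 ≤ p.2 → ∀ y ∈ Set.Icc p.1 p.2,
      g y ∈ Set.Icc (G p).1 (G p).2)
    (a : ι → ℝ)
    (ω : ℝ) (hω : ω = ∑ i, a i)
    (r : ℝ)
    (hrem : ∀ δ : ι → ℝ, (∀ i, L i ≤ a i + δ i ∧ a i + δ i ≤ U i) →
      |∑ i, g (ω + δ i) - ((Fintype.card ι : ℝ) - 1) * g ω - g (ω + ∑ i, δ i)| ≤ r)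
    (k : ι) (C : ι → κ → Set ℝ)
    (hC : ∀ i j, C i j =
      Set.Icc (G (ω - a i + Al i j, ω - a i + Au i j)).1
              (G (ω - a i + Al i j, ω - a i + Au i j)).2
      + ({-(((Fintype.card ι : ℝ) - 1) / (Fintype.card ι : ℝ) * g ω)} : Set ℝ)
      + (if i = k then Set.Icc (-r) r else 0))
    (j : ι → κ) (y : ι → ℝ) (hy : ∀ i, y i ∈ Set.Icc (Al i (j i)) (Au i (j i))) :
    g (∑ i, y i) ∈ ∑ i, C i (j i) := by
  set δ : ι → ℝ := fun i => y i - a i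
  have hρ : |compositionRemainder g ω δ| ≤ r := hrem δ fun i => by
    simp only [δ, add_sub_cancel, hL, hU]
    exact ⟨(inf'_le _ (mem_univ _)).trans (hy i).1, (hy i).2.trans (le_sup' _ (mem_univ _))⟩
  have hys : ∑ i, y i = ω + ∑ i, δ i := by simp [δ, sum_sub_distrib, hω]
  rw [hys, apply_add_sum_eq_sum_add_ite_compositionRemainder g ω δ k]
  refine Set.finsetSum_mem_finsetSum _ _ _ fun i _ => ?_
  have hshift : ω + δ i ∈ Set.Icc (ω - a i + Al i (j i)) (ω - a i + Au i (j i)) := by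
    simp only [δ, Set.mem_Icc]
    constructor <;> linarith [(hy i).1, (hy i).2]
  have hgi := hG (_, _) (hshift.1.trans hshift.2) _ hshift
  rw [hC, sub_eq_add_neg (g _)]
  exact Set.add_ite_mem_add_ite (Set.add_mem_add hgi rfl)
    fun _ => abs_le.mp ((abs_neg _).trans_le hρ)

/-- Correctness of the univariate composition rule (Algorithm 1) of interval
superposition arithmetic: if `G` is an interval extension of `g`, the central
points `a i` satisfy `L i ≤ a i ≤ U i`, `ω = ∑ i, a i`, and `r ≥ 0` bounds the
remainder expression `ρ_g(ω, δ)` for all admissible `δ`, then the output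
coefficients `C i j = G(ω - a i + A i j) - ((n-1)/n)·g(ω)` (with the remainder
interval `[-r, r]` added to row `k`) satisfy
`g (∑ i, y i) ∈ ∑ i, C i (j i)` (Minkowski sum) for every choice of column
indices `j` and points `y i ∈ A i (j i)`. -/
theorem stmt1 {ι κ : Type*} [Fintype ι] [DecidableEq ι] [Fintype κ] [Nonempty ι] [Nonempty κ]
    (Al Au : ι → κ → ℝ) (hA : ∀ i j, Al i j ≤ Au i j)
    (L U : ι → ℝ)
    (hL : ∀ i, L i = univ.inf' univ_nonempty (Al i))
    (hU : ∀ i, U i = univ.sup' univ_nonempty (Au i))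
    (g : ℝ → ℝ) (G : ℝ × ℝ → ℝ × ℝ)
    (hG : ∀ p : ℝ × ℝ, p.1 ≤ p.2 → ∀ y ∈ Set.Icc p.1 p.2,
      g y ∈ Set.Icc (G p).1 (G p).2)
    (a : ι → ℝ) (ha : ∀ i, L i ≤ a i ∧ a i ≤ U i)
    (ω : ℝ) (hω : ω = ∑ i, a i)
    (r : ℝ) (hr : 0 ≤ r)
    (hrem : ∀ δ : ι → ℝ, (∀ i, L i ≤ a i + δ i ∧ a i + δ i ≤ U i) →
      |∑ i, g (ω + δ i) - ((Fintype.card ι : ℝ) - 1) * g ω - g (ω + ∑ i, δ i)| ≤ r)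
    (k : ι) (C : ι → κ → Set ℝ)
    (hC : ∀ i j, C i j =
      Set.Icc (G (ω - a i + Al i j, ω - a i + Au i j)).1
              (G (ω - a i + Al i j, ω - a i + Au i j)).2
      + ({-(((Fintype.card ι : ℝ) - 1) / (Fintype.card ι : ℝ) * g ω)} : Set ℝ)
      + (if i = k then Set.Icc (-r) r else 0))
    (j : ι → κ) (y : ι → ℝ) (hy : ∀ i, y i ∈ Set.Icc (Al i (j i)) (Au i (j i))) :
    g (∑ i, y i) ∈ ∑ i, C i (j i) :=
  stmt1_general Al Au L U hL hU g G hG a ω hω r hrem k C hC j y hy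
end

section
/- Let A and B be n×N matrices of compact real intervals. Set a_i = (U(A_i)+L(A_i))/2, b_i = (U(B_i)+L(B_i))/2, α = Σ_{i=1}^n a_i, β = Σ_{i=1}^n b_i, γ = Σ_{i=1}^n a_i b_i, ω = (αβ − γ)/n, ρ_i(A) = (U(A_i)−L(A_i))/2, ρ_i(B) = (U(B_i)−L(B_i))/2, and R(A,B) = (Σ_{i=1}^n ρ_i(A))(Σ_{i=1}^n ρ_i(B)) − Σ_{i=1}^n ρ_i(A) ρ_i(B). Fix k ∈ {1,…,n} and define interval coefficients C_i^j = (A_i^j + (α − a_i)) * (B_i^j + (β − b_i)) − (α − a_i)(β − b_i) − ω for all i, j, where * denotes the pointwise (elementwise) product of intervals, and then replace C_k^j by C_k^j + [−R(A,B), R(A,B)] for all j. Then for every choice of column indices j_1,…,j_n ∈ {1,…,N} and every choice of points y_i ∈ A_i^{j_i} and z_i ∈ B_i^{j_i}, one has (Σ_{i=1}^n y_i)·(Σ_{i=1}^n z_i) ∈ Σ_{i=1}^n C_i^{j_i} (Minkowski sum of intervals). -/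
open Finset Pointwise

/-!
Write `y i = a i + u i` and `z i = b i + v i`. Expanding, `(∑ y) (∑ z)` is the sum over the rows
of the shifted products `(y i + α - a i) (z i + β - b i) - (α - a i) (β - b i) - ω` plus the cross
terms `(∑ u) (∑ v) - ∑ u i v i = ∑_{i ≠ m} u i v m`. Since `|u i| ≤ ρA i` and `|v i| ≤ ρB i`, the
cross terms are at most `R` in absolute value, so the interval `[-R, R]` added to row `k` absorbs
them.
-/

lemma abs_sub_midpoint_sup'_inf'_le {K κ : Type*} [Field K] [LinearOrder K]
    [IsStrictOrderedRing K] [Fintype κ] [Nonempty κ] (l u : κ → K) {j : κ} {x : K}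
    (hx : x ∈ Set.Icc (l j) (u j)) :
    |x - (univ.sup' univ_nonempty u + univ.inf' univ_nonempty l) / 2|
      ≤ (univ.sup' univ_nonempty u - univ.inf' univ_nonempty l) / 2 := by
  rw [abs_le]
  constructor <;> linarith [inf'_le l (mem_univ j), le_sup' u (mem_univ j), hx.1, hx.2]

section Sums

variable {ι : Type*} [Fintype ι]

lemma sum_mul_sum_sub_sum_mul_eq_sum_mul_sum_erase [DecidableEq ι] {R : Type*} [CommRing R]
    (u v : ι → R) :
    (∑ i, u i) * (∑ i, v i) - ∑ i, u i * v i = ∑ i, u i * ∑ m ∈ univ.erase i, v m := by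
  simp_rw [sum_erase_eq_sub (mem_univ _), mul_sub, sum_sub_distrib, sum_mul]

lemma abs_sum_mul_sum_sub_sum_mul_le {R : Type*} [CommRing R] [LinearOrder R]
    [IsStrictOrderedRing R] (u v p q : ι → R) (hu : ∀ i, |u i| ≤ p i) (hv : ∀ i, |v i| ≤ q i) :
    |(∑ i, u i) * (∑ i, v i) - ∑ i, u i * v i| ≤ (∑ i, p i) * (∑ i, q i) - ∑ i, p i * q i := by
  classical
  rw [sum_mul_sum_sub_sum_mul_eq_sum_mul_sum_erase, sum_mul_sum_sub_sum_mul_eq_sum_mul_sum_erase]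
  calc |∑ i, u i * ∑ m ∈ univ.erase i, v m|
      ≤ ∑ i, |u i| * ∑ m ∈ univ.erase i, |v m| := by
        refine (abs_sum_le_sum_abs _ _).trans (sum_le_sum fun i _ => ?_)
        rw [abs_mul]
        gcongr
        exact abs_sum_le_sum_abs _ _
    _ ≤ ∑ i, p i * ∑ m ∈ univ.erase i, q m := by
        gcongr with i _ m
        · exact (abs_nonneg _).trans (hu i)
        · exact hu i
        · exact hv m

lemma sum_mul_sum_eq_sum_shifted_mul_add {K : Type*} [Field K] (y z a b : ι → K)
    (hn : (Fintype.card ι : K) ≠ 0) :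
    (∑ i, y i) * (∑ i, z i) =
      ∑ i, ((y i + (∑ m, a m - a i)) * (z i + (∑ m, b m - b i))
        - (∑ m, a m - a i) * (∑ m, b m - b i)
        - ((∑ m, a m) * (∑ m, b m) - ∑ m, a m * b m) / Fintype.card ι)
      + ((∑ i, (y i - a i)) * (∑ i, (z i - b i)) - ∑ i, (y i - a i) * (z i - b i)) := by
  simp only [sum_sub_distrib, sum_add_distrib, sum_const, card_univ, nsmul_eq_mul, mul_sub,
    sub_mul, mul_add, add_mul, ← mul_sum, ← sum_mul]
  field_simp
  ring

end Sums

theorem stmt2_general {ι κ : Type*} [Fintype ι] [DecidableEq ι] [Fintype κ]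
    [Nonempty ι] [Nonempty κ]
    (Al Au Bl Bu : ι → κ → ℝ)
    (LA UA LB UB : ι → ℝ)
    (hLA : ∀ i, LA i = univ.inf' univ_nonempty (Al i))
    (hUA : ∀ i, UA i = univ.sup' univ_nonempty (Au i))
    (hLB : ∀ i, LB i = univ.inf' univ_nonempty (Bl i))
    (hUB : ∀ i, UB i = univ.sup' univ_nonempty (Bu i))
    (a b : ι → ℝ)
    (ha : ∀ i, a i = (UA i + LA i) / 2) (hb : ∀ i, b i = (UB i + LB i) / 2)
    (α β γ ω : ℝ)
    (hα : α = ∑ i, a i) (hβ : β = ∑ i, b i) (hγ : γ = ∑ i, a i * b i)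
    (hω : ω = (α * β - γ) / (Fintype.card ι : ℝ))
    (ρA ρB : ι → ℝ)
    (hρA : ∀ i, ρA i = (UA i - LA i) / 2) (hρB : ∀ i, ρB i = (UB i - LB i) / 2)
    (R : ℝ) (hR : R = (∑ i, ρA i) * (∑ i, ρB i) - ∑ i, ρA i * ρB i)
    (k : ι) (C : ι → κ → Set ℝ)
    (hC : ∀ i j, C i j =
      Set.Icc (Al i j + (α - a i)) (Au i j + (α - a i))
        * Set.Icc (Bl i j + (β - b i)) (Bu i j + (β - b i))
      + ({-((α - a i) * (β - b i)) - ω} : Set ℝ)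
      + (if i = k then Set.Icc (-R) R else 0))
    (j : ι → κ) (y z : ι → ℝ)
    (hy : ∀ i, y i ∈ Set.Icc (Al i (j i)) (Au i (j i)))
    (hz : ∀ i, z i ∈ Set.Icc (Bl i (j i)) (Bu i (j i))) :
    (∑ i, y i) * (∑ i, z i) ∈ ∑ i, C i (j i) := by
  set r := (∑ i, (y i - a i)) * (∑ i, (z i - b i)) - ∑ i, (y i - a i) * (z i - b i)
  have hr : |r| ≤ R := by
    rw [hR]
    refine abs_sum_mul_sum_sub_sum_mul_le _ _ _ _ (fun i => ?_) (fun i => ?_)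
    · rw [ha, hρA, hLA, hUA]
      exact abs_sub_midpoint_sup'_inf'_le _ _ (hy i)
    · rw [hb, hρB, hLB, hUB]
      exact abs_sub_midpoint_sup'_inf'_le _ _ (hz i)
  subst hα hβ hγ hω
  rw [sum_mul_sum_eq_sum_shifted_mul_add y z a b (Nat.cast_ne_zero.2 Fintype.card_ne_zero)]
  change _ + r ∈ _
  rw [← Fintype.sum_ite_eq' k (fun _ => r), ← sum_add_distrib]
  refine Set.finsetSum_mem_finsetSum _ _ _ fun i _ => ?_
  rw [hC, show ∀ p c w : ℝ, p - c - w = p + (-c - w) from fun _ _ _ => by ring]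
  refine Set.add_mem_add (Set.add_mem_add (Set.mul_mem_mul ?_ ?_) rfl) ?_
  · exact ⟨by linarith [(hy i).1], by linarith [(hy i).2]⟩
  · exact ⟨by linarith [(hz i).1], by linarith [(hz i).2]⟩
  · split_ifs
    · exact abs_le.1 hr
    · exact Set.zero_mem_zero

/-- Correctness of the product rule (Algorithm 2) of interval superposition
arithmetic: with central points `a i, b i`, sums `α, β, γ`, offset
`ω = (αβ - γ)/n`, radii `ρA i, ρB i` and remainder bound `R`, the output
coefficients `C i j = (A i j + (α - a i)) * (B i j + (β - b i))
- (α - a i)(β - b i) - ω` (with the remainder interval `[-R, R]` added to row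
`k`) satisfy `(∑ i, y i) * (∑ i, z i) ∈ ∑ i, C i (j i)` (Minkowski sum) for
every choice of column indices `j` and points `y i ∈ A i (j i)`,
`z i ∈ B i (j i)`. Here `*` on sets is the pointwise product. -/
theorem stmt2 {ι κ : Type*} [Fintype ι] [DecidableEq ι] [Fintype κ]
    [Nonempty ι] [Nonempty κ]
    (Al Au Bl Bu : ι → κ → ℝ)
    (hA : ∀ i j, Al i j ≤ Au i j) (hB : ∀ i j, Bl i j ≤ Bu i j)
    (LA UA LB UB : ι → ℝ)
    (hLA : ∀ i, LA i = univ.inf' univ_nonempty (Al i))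
    (hUA : ∀ i, UA i = univ.sup' univ_nonempty (Au i))
    (hLB : ∀ i, LB i = univ.inf' univ_nonempty (Bl i))
    (hUB : ∀ i, UB i = univ.sup' univ_nonempty (Bu i))
    (a b : ι → ℝ)
    (ha : ∀ i, a i = (UA i + LA i) / 2) (hb : ∀ i, b i = (UB i + LB i) / 2)
    (α β γ ω : ℝ)
    (hα : α = ∑ i, a i) (hβ : β = ∑ i, b i) (hγ : γ = ∑ i, a i * b i)
    (hω : ω = (α * β - γ) / (Fintype.card ι : ℝ))
    (ρA ρB : ι → ℝ)
    (hρA : ∀ i, ρA i = (UA i - LA i) / 2) (hρB : ∀ i, ρB i = (UB i - LB i) / 2)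
    (R : ℝ) (hR : R = (∑ i, ρA i) * (∑ i, ρB i) - ∑ i, ρA i * ρB i)
    (k : ι) (C : ι → κ → Set ℝ)
    (hC : ∀ i j, C i j =
      Set.Icc (Al i j + (α - a i)) (Au i j + (α - a i))
        * Set.Icc (Bl i j + (β - b i)) (Bu i j + (β - b i))
      + ({-((α - a i) * (β - b i)) - ω} : Set ℝ)
      + (if i = k then Set.Icc (-R) R else 0))
    (j : ι → κ) (y z : ι → ℝ)
    (hy : ∀ i, y i ∈ Set.Icc (Al i (j i)) (Au i (j i)))
    (hz : ∀ i, z i ∈ Set.Icc (Bl i (j i)) (Bu i (j i))) :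
    (∑ i, y i) * (∑ i, z i) ∈ ∑ i, C i (j i) :=
  stmt2_general Al Au Bl Bu LA UA LB UB hLA hUA hLB hUB a b ha hb α β γ ω hα hβ hγ hω ρA ρB hρA hρB
    R hR k C hC j y z hy hz
end

section
/- Let D ⊆ ℝ be an interval, g : ℝ → ℝ twice continuously differentiable on D with |g''(ξ)| ≤ M for all ξ ∈ D, and let ω ∈ D and δ ∈ ℝ^n be such that ω + δ_i ∈ D for all i and ω + Σ_{i=1}^n δ_i ∈ D. Then |ρ_g(ω, δ)| ≤ M (Σ_{i=1}^n |δ_i|)². In particular, if A is an n×N matrix of compact intervals and |δ_i| ≤ U(A_i) − L(A_i) for all i, then |ρ_g(ω, δ)| ≤ M (μ(A) − λ(A))². -/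
/-!
Expanding each value of `g` to second order around `ω` with the common slope `g' ω`, the
constant and linear terms of `ρ_g(ω, δ)` cancel, so `ρ_g(ω, δ)` is a signed sum of `n + 1`
Taylor remainders. Each is bounded by `M/2` times the square of its increment, and both
`∑ δ_i²` and `(∑ δ_i)²` are at most `(∑ |δ_i|)²`.
-/

open Finset Set

theorem Convex.abs_sub_sub_mul_le_of_abs_deriv_sub_le {D : Set ℝ} (hD : Convex ℝ D)
    {g g' : ℝ → ℝ} (hg' : ∀ z ∈ D, HasDerivWithinAt g (g' z) D z) {M x y : ℝ}
    (hx : x ∈ D) (hy : y ∈ D) (hlip : ∀ z ∈ D, |g' z - g' x| ≤ M * |z - x|) :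
    |g y - g x - (y - x) * g' x| ≤ M / 2 * (y - x) ^ 2 := by
  set d := y - x
  have hseg : MapsTo (fun t : ℝ => x + t * d) (Icc 0 1) D := fun t ht => by
    simpa [smul_eq_mul] using hD.add_smul_sub_mem hx hy ht
  have hF : ∀ t ∈ Icc (0 : ℝ) 1, HasDerivWithinAt (fun t => g (x + t * d) - g x - t * d * g' x)
      (d * (g' (x + t * d) - g' x)) (Icc 0 1) t := fun t ht => by
    have hline : HasDerivWithinAt (fun t : ℝ => x + t * d) d (Icc 0 1) t := by
      simpa using ((hasDerivAt_id t).mul_const d).const_add x |>.hasDerivWithinAt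
    have hscale : HasDerivWithinAt (fun t : ℝ => t * d) d (Icc 0 1) t := by
      simpa using (hasDerivAt_id t).mul_const d |>.hasDerivWithinAt
    exact ((((hg' _ (hseg ht)).comp t hline hseg).sub_const (g x)).sub
      (hscale.mul_const (g' x))).congr_deriv (by ring)
  have hbound : ∀ t ∈ Ico (0 : ℝ) 1, ‖d * (g' (x + t * d) - g' x)‖ ≤ M * d ^ 2 * t := by
    intro t ht
    have hlip_t : |g' (x + t * d) - g' x| ≤ M * |t * d| := by
      simpa using hlip _ (hseg (Ico_subset_Icc_self ht))
    rw [Real.norm_eq_abs, abs_mul]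
    calc |d| * |g' (x + t * d) - g' x| ≤ |d| * (M * |t * d|) := by gcongr
      _ = M * |d| ^ 2 * t := by rw [abs_mul, abs_of_nonneg ht.1]; ring
      _ = M * d ^ 2 * t := by rw [sq_abs]
  have hB (t : ℝ) : HasDerivAt (fun t => M / 2 * d ^ 2 * t ^ 2) (M * d ^ 2 * t) t := by
    simpa using ((hasDerivAt_pow 2 t).const_mul (M / 2 * d ^ 2)).congr_deriv (by ring)
  -- comparison with `t ↦ M d² t² / 2` along the segment, evaluated at `t = 1`
  have key := image_norm_le_of_norm_deriv_right_le_deriv_boundary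
    (fun t ht => (hF t ht).continuousWithinAt)
    (fun t ht => (hF t (Ico_subset_Icc_self ht)).mono_of_mem_nhdsWithin
      (Icc_mem_nhdsGE_of_mem ht))
    (by simp) hB hbound (right_mem_Icc.2 zero_le_one)
  simpa [d] using key

theorem Convex.abs_sub_sub_mul_le_of_abs_deriv2_le {D : Set ℝ} (hD : Convex ℝ D)
    {g g' g'' : ℝ → ℝ} (hg' : ∀ z ∈ D, HasDerivWithinAt g (g' z) D z)
    (hg'' : ∀ z ∈ D, HasDerivWithinAt g' (g'' z) D z) {M : ℝ} (hM : ∀ z ∈ D, |g'' z| ≤ M)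
    {x y : ℝ} (hx : x ∈ D) (hy : y ∈ D) :
    |g y - g x - (y - x) * g' x| ≤ M / 2 * (y - x) ^ 2 :=
  hD.abs_sub_sub_mul_le_of_abs_deriv_sub_le hg' hx hy fun _ hz =>
    hD.norm_image_sub_le_of_norm_hasDerivWithin_le hg'' hM hx hz

section SumRemainder

variable {ι : Type*} [Fintype ι]

/-- The remainder expression `ρ_g(ω, δ)`. -/
def sumRemainder (g : ℝ → ℝ) (ω : ℝ) (δ : ι → ℝ) : ℝ :=
  ∑ i, g (ω + δ i) - ((Fintype.card ι : ℝ) - 1) * g ω - g (ω + ∑ i, δ i)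

theorem sumRemainder_eq_sub (g : ℝ → ℝ) (ω : ℝ) (δ : ι → ℝ) (c : ℝ) :
    sumRemainder g ω δ = ∑ i, (g (ω + δ i) - g ω - δ i * c)
      - (g (ω + ∑ i, δ i) - g ω - (∑ i, δ i) * c) := by
  rw [sumRemainder, sum_sub_distrib, sum_sub_distrib, ← sum_mul, sum_const, card_univ,
    nsmul_eq_mul]
  ring

theorem abs_sumRemainder_le_of_taylor {g : ℝ → ℝ} {ω : ℝ} {δ : ι → ℝ} {c M : ℝ} (hM : 0 ≤ M)
    (hδ : ∀ i, |g (ω + δ i) - g ω - δ i * c| ≤ M / 2 * δ i ^ 2)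
    (hsum : |g (ω + ∑ i, δ i) - g ω - (∑ i, δ i) * c| ≤ M / 2 * (∑ i, δ i) ^ 2) :
    |sumRemainder g ω δ| ≤ M * (∑ i, |δ i|) ^ 2 := by
  have hsq : ∑ i, δ i ^ 2 ≤ (∑ i, |δ i|) ^ 2 := by
    simpa only [sq_abs] using sum_sq_le_sq_sum_of_nonneg fun i _ => abs_nonneg (δ i)
  have hsum_sq : (∑ i, δ i) ^ 2 ≤ (∑ i, |δ i|) ^ 2 :=
    sq_le_sq' (neg_le_of_abs_le (abs_sum_le_sum_abs _ _)) (le_of_abs_le (abs_sum_le_sum_abs _ _))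
  rw [sumRemainder_eq_sub g ω δ c]
  calc _ ≤ ∑ i, |g (ω + δ i) - g ω - δ i * c| + |g (ω + ∑ i, δ i) - g ω - (∑ i, δ i) * c| :=
        (abs_sub _ _).trans (add_le_add_left (abs_sum_le_sum_abs _ _) _)
    _ ≤ M / 2 * ∑ i, δ i ^ 2 + M / 2 * (∑ i, δ i) ^ 2 := by
        rw [mul_sum]; exact add_le_add (sum_le_sum fun i _ => hδ i) hsum
    _ ≤ M / 2 * (∑ i, |δ i|) ^ 2 + M / 2 * (∑ i, |δ i|) ^ 2 := by gcongr
    _ = M * (∑ i, |δ i|) ^ 2 := by ring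

theorem Convex.abs_sumRemainder_le {D : Set ℝ} (hD : Convex ℝ D) {g g' g'' : ℝ → ℝ}
    (hg' : ∀ x ∈ D, HasDerivWithinAt g (g' x) D x)
    (hg'' : ∀ x ∈ D, HasDerivWithinAt g' (g'' x) D x) {M : ℝ} (hM : ∀ ξ ∈ D, |g'' ξ| ≤ M)
    {ω : ℝ} (hω : ω ∈ D) {δ : ι → ℝ} (hδD : ∀ i, ω + δ i ∈ D) (hsum : ω + ∑ i, δ i ∈ D) :
    |sumRemainder g ω δ| ≤ M * (∑ i, |δ i|) ^ 2 := by
  have htaylor {y : ℝ} (hy : y ∈ D) := hD.abs_sub_sub_mul_le_of_abs_deriv2_le hg' hg'' hM hω hy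
  refine abs_sumRemainder_le_of_taylor (c := g' ω) ((abs_nonneg _).trans (hM ω hω))
    (fun i => ?_) ?_
  · simpa using htaylor (hδD i)
  · simpa using htaylor hsum

end SumRemainder

theorem stmt3_general {ι : Type*} [Fintype ι]
    (D : Set ℝ) (hD : Convex ℝ D)
    (g g' g'' : ℝ → ℝ)
    (hg' : ∀ x ∈ D, HasDerivWithinAt g (g' x) D x)
    (hg'' : ∀ x ∈ D, HasDerivWithinAt g' (g'' x) D x)
    (M : ℝ) (hM : ∀ ξ ∈ D, |g'' ξ| ≤ M)
    (ω : ℝ) (hω : ω ∈ D) (δ : ι → ℝ)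
    (hδD : ∀ i, ω + δ i ∈ D) (hsum : ω + ∑ i, δ i ∈ D)
    (L U : ι → ℝ)
    (hδA : ∀ i, |δ i| ≤ U i - L i) :
    |∑ i, g (ω + δ i) - ((Fintype.card ι : ℝ) - 1) * g ω - g (ω + ∑ i, δ i)|
        ≤ M * (∑ i, |δ i|) ^ 2 ∧
    |∑ i, g (ω + δ i) - ((Fintype.card ι : ℝ) - 1) * g ω - g (ω + ∑ i, δ i)|
        ≤ M * ((∑ i, U i) - ∑ i, L i) ^ 2 := by
  have hρ : |sumRemainder g ω δ| ≤ M * (∑ i, |δ i|) ^ 2 :=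
    hD.abs_sumRemainder_le hg' hg'' hM hω hδD hsum
  have hM0 : 0 ≤ M := (abs_nonneg _).trans (hM ω hω)
  refine ⟨hρ, hρ.trans ?_⟩
  have hwidth : ∑ i, |δ i| ≤ (∑ i, U i) - ∑ i, L i := by
    rw [← sum_sub_distrib]
    exact sum_le_sum fun i _ => hδA i
  gcongr

/-- Local overestimation bound (Lemma 4.1): if `g` is twice continuously
differentiable on an interval (convex set) `D ⊆ ℝ` with `|g''| ≤ M` on `D`,
and `ω`, `ω + δ i`, `ω + ∑ i, δ i` all lie in `D`, then the remainder
expression `ρ_g(ω, δ)` is bounded by `M (∑ i, |δ i|)²`; in particular, if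
moreover `|δ i| ≤ U i - L i` for the row bounds of an interval matrix `A`,
then it is bounded by `M (μ(A) - λ(A))²`. -/
theorem stmt3 {ι κ : Type*} [Fintype ι] [Fintype κ] [Nonempty κ]
    (D : Set ℝ) (hD : Convex ℝ D)
    (g g' g'' : ℝ → ℝ)
    (hg' : ∀ x ∈ D, HasDerivWithinAt g (g' x) D x)
    (hg'' : ∀ x ∈ D, HasDerivWithinAt g' (g'' x) D x)
    (hcont : ContinuousOn g'' D)
    (M : ℝ) (hM : ∀ ξ ∈ D, |g'' ξ| ≤ M)
    (ω : ℝ) (hω : ω ∈ D) (δ : ι → ℝ)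
    (hδD : ∀ i, ω + δ i ∈ D) (hsum : ω + ∑ i, δ i ∈ D)
    (Al Au : ι → κ → ℝ) (hA : ∀ i j, Al i j ≤ Au i j)
    (L U : ι → ℝ)
    (hL : ∀ i, L i = univ.inf' univ_nonempty (Al i))
    (hU : ∀ i, U i = univ.sup' univ_nonempty (Au i))
    (hδA : ∀ i, |δ i| ≤ U i - L i) :
    |∑ i, g (ω + δ i) - ((Fintype.card ι : ℝ) - 1) * g ω - g (ω + ∑ i, δ i)|
        ≤ M * (∑ i, |δ i|) ^ 2 ∧
    |∑ i, g (ω + δ i) - ((Fintype.card ι : ℝ) - 1) * g ω - g (ω + ∑ i, δ i)|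
        ≤ M * ((∑ i, U i) - ∑ i, L i) ^ 2 :=
  stmt3_general D hD g g' g'' hg' hg'' M hM ω hω δ hδD hsum L U hδA
end

section
/- Let n ≥ 1, ω ∈ ℝ, and let δ, s ∈ ℝ^n satisfy |δ_i| ≤ s_i for all i. Then for g(x) = x², |ρ_g(ω, δ)| = |Σ_{i=1}^n (ω + δ_i)² − (n−1) ω² − (ω + Σ_{i=1}^n δ_i)²| ≤ Σ_{i=1}^n (σ − s_i) s_i, where σ = Σ_{i=1}^n s_i. -/
/-!
Expanding the squares, all terms involving `ω` cancel and the remainder is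
`∑ i, δ i * (δ i - ∑ j, δ j) = -∑ i, δ i * ∑ j ≠ i, δ j`. Each summand is then at most
`s i * (σ - s i)` in absolute value.
-/

open Finset

theorem sum_add_sq_sub_sq_add_sum {ι R : Type*} [CommRing R] (t : Finset ι) (ω : R) (δ : ι → R) :
    ∑ i ∈ t, (ω + δ i) ^ 2 - ((#t : R) - 1) * ω ^ 2 - (ω + ∑ i ∈ t, δ i) ^ 2
      = ∑ i ∈ t, δ i * (δ i - ∑ j ∈ t, δ j) := by
  simp only [add_sq, mul_sub, sum_add_distrib, sum_sub_distrib, ← sum_mul, ← mul_sum, sum_const,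
    nsmul_eq_mul, ← sq]
  ring

theorem abs_sum_sub_le_sum_sub {ι α : Type*} [AddCommGroup α] [LinearOrder α]
    [IsOrderedAddMonoid α] {t : Finset ι} {δ s : ι → α} (hδ : ∀ j ∈ t, |δ j| ≤ s j)
    {i : ι} (hi : i ∈ t) :
    |∑ j ∈ t, δ j - δ i| ≤ ∑ j ∈ t, s j - s i := by
  classical
  rw [← sum_erase_eq_sub hi, ← sum_erase_eq_sub hi]
  exact (abs_sum_le_sum_abs _ _).trans (sum_le_sum fun j hj => hδ j (mem_of_mem_erase hj))

theorem stmt9_general {ι : Type*} [Fintype ι]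
    (ω : ℝ) (δ s : ι → ℝ) (hδ : ∀ i, |δ i| ≤ s i)
    (σ : ℝ) (hσ : σ = ∑ i, s i) :
    |∑ i, (ω + δ i) ^ 2 - ((Fintype.card ι : ℝ) - 1) * ω ^ 2 - (ω + ∑ i, δ i) ^ 2|
      ≤ ∑ i, (σ - s i) * s i := by
  rw [← card_univ, sum_add_sq_sub_sq_add_sum]
  refine (abs_sum_le_sum_abs _ _).trans (sum_le_sum fun i hi => ?_)
  have hrest : |δ i - ∑ j, δ j| ≤ σ - s i := by
    rw [abs_sub_comm, hσ]
    exact abs_sum_sub_le_sum_sub (fun j _ => hδ j) hi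
  rw [abs_mul, mul_comm (σ - s i)]
  exact mul_le_mul (hδ i) hrest (abs_nonneg _) ((abs_nonneg _).trans (hδ i))

/-- Remainder bound for the squaring atom function `g(x) = x²` in interval
superposition arithmetic. -/
theorem stmt9 {ι : Type*} [Fintype ι] [Nonempty ι]
    (ω : ℝ) (δ s : ι → ℝ) (hδ : ∀ i, |δ i| ≤ s i)
    (σ : ℝ) (hσ : σ = ∑ i, s i) :
    |∑ i, (ω + δ i) ^ 2 - ((Fintype.card ι : ℝ) - 1) * ω ^ 2 - (ω + ∑ i, δ i) ^ 2|
      ≤ ∑ i, (σ - s i) * s i :=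
  stmt9_general ω δ s hδ σ hσ
end

section
/- Let n ≥ 1, let z_1,…,z_n be complex numbers, and let s_1,…,s_n be nonnegative reals with |z_i − 1| ≤ s_i for all i. Then |Σ_{i=1}^n z_i − Π_{i=1}^n z_i − (n−1)| ≤ Π_{i=1}^n (1 + s_i) − Σ_{i=1}^n s_i − 1. -/
/-!
Writing `zᵢ = 1 + tᵢ` and expanding `∏ (1 + tᵢ)` over subsets, the constant and linear terms
cancel against `∑ zᵢ - (n - 1)`, so the left-hand side is the norm of the sum of `∏_{i ∈ S} tᵢ`
over the subsets `S` with `|S| ≥ 2`. The same expansion with `sᵢ` in place of `tᵢ` gives the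
right-hand side, and the termwise bound `‖∏_{i ∈ S} tᵢ‖ ≤ ∏_{i ∈ S} sᵢ` finishes the proof.
-/

open Finset

namespace Finset

variable {ι R : Type*}

def sumProdCardGeTwo [CommRing R] (s : Finset ι) (t : ι → R) : R :=
  ∑ S ∈ s.powerset with 2 ≤ #S, ∏ i ∈ S, t i

theorem prod_one_add_eq_one_add_sum_add_sumProdCardGeTwo [CommRing R] (s : Finset ι)
    (t : ι → R) : ∏ i ∈ s, (1 + t i) = 1 + ∑ i ∈ s, t i + s.sumProdCardGeTwo t := by
  classical
  have h_card_le_one :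
      s.powerset.filter (fun S => ¬ 2 ≤ #S) = insert ∅ (s.map ⟨_, singleton_injective⟩) := by
    ext S
    simp only [not_le, mem_filter, mem_powerset, Nat.lt_succ_iff,
      Nat.le_one_iff_eq_zero_or_eq_one, card_eq_zero, card_eq_one, mem_insert, mem_map,
      Function.Embedding.coeFn_mk]
    constructor
    · rintro ⟨hS, rfl | ⟨a, rfl⟩⟩
      exacts [.inl rfl, .inr ⟨a, singleton_subset_iff.mp hS, rfl⟩]
    · rintro (rfl | ⟨a, ha, rfl⟩)
      exacts [⟨empty_subset s, .inl rfl⟩, ⟨singleton_subset_iff.mpr ha, .inr ⟨a, rfl⟩⟩]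
  rw [prod_one_add, ← sum_filter_not_add_sum_filter _ (fun S => 2 ≤ #S), h_card_le_one,
    sum_insert (by simp), sum_map]
  simp [sumProdCardGeTwo, add_assoc]

theorem norm_sumProdCardGeTwo_le [NormedCommRing R] (s : Finset ι) {t : ι → R} {b : ι → ℝ}
    (htb : ∀ i, ‖t i‖ ≤ b i) : ‖s.sumProdCardGeTwo t‖ ≤ s.sumProdCardGeTwo b := by
  refine (norm_sum_le _ _).trans <| sum_le_sum fun S hS => ?_
  have hS_nonempty : S.Nonempty := card_pos.mp (by have := (mem_filter.mp hS).2; omega)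
  exact (norm_prod_le' S hS_nonempty t).trans <|
    prod_le_prod (fun _ _ => norm_nonneg _) fun i _ => htb i

end Finset

theorem stmt11_general {ι : Type*} [Fintype ι]
    (z : ι → ℂ) (s : ι → ℝ)
    (hz : ∀ i, ‖z i - 1‖ ≤ s i) :
    ‖(∑ i, z i) - (∏ i, z i) - ((Fintype.card ι : ℂ) - 1)‖
      ≤ (∏ i, (1 + s i)) - (∑ i, s i) - 1 := by
  have h_expand_z := univ.prod_one_add_eq_one_add_sum_add_sumProdCardGeTwo (fun i => z i - 1)
  have h_expand_s := univ.prod_one_add_eq_one_add_sum_add_sumProdCardGeTwo s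
  simp only [add_sub_cancel, sum_sub_distrib, sum_const, card_univ, nsmul_eq_mul,
    mul_one] at h_expand_z
  calc ‖(∑ i, z i) - (∏ i, z i) - ((Fintype.card ι : ℂ) - 1)‖
      = ‖univ.sumProdCardGeTwo (fun i => z i - 1)‖ := by
        rw [h_expand_z, ← norm_neg]; ring_nf
    _ ≤ univ.sumProdCardGeTwo s := univ.norm_sumProdCardGeTwo_le hz
    _ = (∏ i, (1 + s i)) - (∑ i, s i) - 1 := by rw [h_expand_s]; ring

/-- Key combinatorial inequality for complex numbers near 1, used in the
derivation of the exponential, sine and cosine remainder bounds of interval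
superposition arithmetic. -/
theorem stmt11 {ι : Type*} [Fintype ι] [Nonempty ι]
    (z : ι → ℂ) (s : ι → ℝ) (hs : ∀ i, 0 ≤ s i)
    (hz : ∀ i, ‖z i - 1‖ ≤ s i) :
    ‖(∑ i, z i) - (∏ i, z i) - ((Fintype.card ι : ℂ) - 1)‖
      ≤ (∏ i, (1 + s i)) - (∑ i, s i) - 1 :=
  stmt11_general z s hz
end

section
/- Let n ≥ 1, ω ∈ ℝ, and δ ∈ ℝ^n be such that ω ≠ 0, ω + δ_i ≠ 0 for all i, and ω + Σ_{k=1}^n δ_k ≠ 0. Then Σ_{i=1}^n 1/(ω + δ_i) − 1/(ω + Σ_{k=1}^n δ_k) − (n−1)/ω = (1/ω) · (1/(ω + Σ_{k=1}^n δ_k)) · Σ_{i=1}^n [ δ_i (δ_i − Σ_{k=1}^n δ_k) / (ω + δ_i) ]. -/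
/-!
Partial fractions: `δ (δ - S) / (ω + δ) = δ - (ω + S) + ω (ω + S) / (ω + δ)`.
Summing over `i` with `S = ∑ δ_k` and dividing by `ω (ω + S)` leaves
`∑ 1 / (ω + δ_i) - n / ω + S / (ω (ω + S))`, and `S / (ω (ω + S)) = 1 / ω - 1 / (ω + S)`.
-/

open Finset

section

variable {K : Type*} [Field K]

theorem mul_sub_div_add_eq {ω d s : K} (hd : ω + d ≠ 0) :
    d * (d - s) / (ω + d) = d - (ω + s) + ω * (ω + s) / (ω + d) := by
  field_simp
  ring

theorem sum_mul_sub_sum_div_add_eq {ι : Type*} [Fintype ι] (ω : K) (δ : ι → K)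
    (hδ : ∀ i, ω + δ i ≠ 0) :
    ∑ i, δ i * (δ i - ∑ k, δ k) / (ω + δ i)
      = ∑ k, δ k - Fintype.card ι * (ω + ∑ k, δ k)
          + ω * (ω + ∑ k, δ k) * ∑ i, 1 / (ω + δ i) := by
  simp_rw [mul_sub_div_add_eq (hδ _), sum_add_distrib, sum_sub_distrib,
    sum_const, card_univ, nsmul_eq_mul, mul_sum, mul_one_div]

end

theorem stmt12_general {ι : Type*} [Fintype ι]
    (ω : ℝ) (δ : ι → ℝ)
    (hω : ω ≠ 0) (hδ : ∀ i, ω + δ i ≠ 0) (hsum : ω + ∑ k, δ k ≠ 0) :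
    (∑ i, 1 / (ω + δ i)) - 1 / (ω + ∑ k, δ k) - ((Fintype.card ι : ℝ) - 1) / ω
      = (1 / ω) * (1 / (ω + ∑ k, δ k))
          * ∑ i, δ i * (δ i - ∑ k, δ k) / (ω + δ i) := by
  rw [sum_mul_sub_sum_div_add_eq ω δ hδ]
  field_simp
  ring

/-- The exact algebraic identity underlying the remainder bound for the
univariate inversion atom function `g(x) = 1/x`. -/
theorem stmt12 {ι : Type*} [Fintype ι] [Nonempty ι]
    (ω : ℝ) (δ : ι → ℝ)
    (hω : ω ≠ 0) (hδ : ∀ i, ω + δ i ≠ 0) (hsum : ω + ∑ k, δ k ≠ 0) :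
    (∑ i, 1 / (ω + δ i)) - 1 / (ω + ∑ k, δ k) - ((Fintype.card ι : ℝ) - 1) / ω
      = (1 / ω) * (1 / (ω + ∑ k, δ k))
          * ∑ i, δ i * (δ i - ∑ k, δ k) / (ω + δ i) :=
  stmt12_general ω δ hω hδ hsum
end

section
/- Let n ≥ 1 and L, U ∈ ℝ^n with L_i ≤ U_i for all i and λ = Σ_{i=1}^n L_i > 0; set μ = Σ_{i=1}^n U_i, a_i = (L_i μ + U_i λ)/(λ + μ), ω = Σ_{i=1}^n a_i, and s_i = max{ (a_i − L_i)/(ω − a_i + L_i), (U_i − a_i)/(ω − a_i + U_i) }. Then for every δ ∈ ℝ^n with L_i ≤ a_i + δ_i ≤ U_i for all i, |Σ_{i=1}^n 1/(ω + δ_i) − (n−1)/ω − 1/(ω + Σ_{i=1}^n δ_i)| ≤ ( Σ_{i=1}^n s_i ( μ − ω − (U_i − a_i) ) ) / (ω λ). -/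
/-!
Writing `Δ = ∑ δᵢ`, the remainder of `1/x` is `∑ᵢ δᵢ (δᵢ - Δ) / (ω (ω + Δ) (ω + δᵢ))`.
Each factor is bounded separately: `|δᵢ| / (ω + δᵢ) ≤ sᵢ` because `t ↦ |t| / (ω + t)` decreases
for `t ≤ 0` and increases for `t ≥ 0`; `|δᵢ - Δ| = |∑_{j ≠ i} δⱼ| ≤ ∑_{j ≠ i} (Uⱼ - aⱼ)`, which is
`μ - ω - (Uᵢ - aᵢ)`, because the choice of `aⱼ` splits `[Lⱼ, Uⱼ]` in the ratio `λ : μ`, so that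
`aⱼ - Lⱼ ≤ Uⱼ - aⱼ`; and `ω + Δ = ∑ (aⱼ + δⱼ) ≥ λ`.
-/

open Finset

noncomputable def invRemainder {ι : Type*} [Fintype ι] (ω : ℝ) (δ : ι → ℝ) : ℝ :=
  (∑ i, 1 / (ω + δ i)) - ((Fintype.card ι : ℝ) - 1) / ω - 1 / (ω + ∑ i, δ i)

theorem invRemainder_eq_sum {ι : Type*} [Fintype ι] {ω : ℝ} {δ : ι → ℝ} (hω : ω ≠ 0)
    (hδ : ∀ i, ω + δ i ≠ 0) (hΔ : ω + ∑ i, δ i ≠ 0) :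
    invRemainder ω δ = ∑ i, δ i * (δ i - ∑ j, δ j) / (ω * (ω + ∑ j, δ j) * (ω + δ i)) := by
  rw [invRemainder]
  set Δ := ∑ j, δ j
  have hterm : ∀ i, δ i * (δ i - Δ) / (ω * (ω + Δ) * (ω + δ i))
      = 1 / (ω + δ i) - 1 / ω + δ i / (ω * (ω + Δ)) := fun i => by
    have := hδ i
    field_simp
    ring
  have hlast : Δ / (ω * (ω + Δ)) = 1 / ω - 1 / (ω + Δ) := by
    field_simp
    ring
  rw [Finset.sum_congr rfl fun i _ => hterm i, Finset.sum_add_distrib, Finset.sum_sub_distrib,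
    Finset.sum_const, Finset.card_univ, nsmul_eq_mul, ← Finset.sum_div, hlast]
  ring

theorem abs_div_add_le_max {ω a L U t : ℝ} (hω : 0 ≤ ω) (hpos : 0 < ω - a + L)
    (hL : L ≤ a + t) (hU : a + t ≤ U) :
    |t| / (ω + t) ≤ max ((a - L) / (ω - a + L)) ((U - a) / (ω - a + U)) := by
  rcases le_or_gt 0 t with ht | ht
  · refine le_max_of_le_right ?_
    rw [abs_of_nonneg ht, div_le_div_iff₀ (by linarith) (by linarith)]
    nlinarith
  · refine le_max_of_le_left ?_
    rw [abs_of_neg ht, div_le_div_iff₀ (by linarith) hpos]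
    nlinarith

theorem abs_remainder_term_le {ω Δ d s M lam : ℝ} (hω : 0 < ω) (hlam : 0 < lam)
    (hΔ : lam ≤ ω + Δ) (hd : 0 < ω + d) (hs : |d| / (ω + d) ≤ s) (hM : |d - Δ| ≤ M) :
    |d * (d - Δ) / (ω * (ω + Δ) * (ω + d))| ≤ s * M / (ω * lam) := by
  have hs0 : 0 ≤ s := (div_nonneg (abs_nonneg d) hd.le).trans hs
  have hsM : 0 ≤ s * M := mul_nonneg hs0 ((abs_nonneg _).trans hM)
  have hΔ0 : 0 < ω + Δ := hlam.trans_le hΔ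
  calc |d * (d - Δ) / (ω * (ω + Δ) * (ω + d))|
      = |d| / (ω + d) * |d - Δ| / (ω * (ω + Δ)) := by
        rw [abs_div, abs_mul, abs_of_pos (mul_pos (mul_pos hω hΔ0) hd)]
        field_simp
    _ ≤ s * M / (ω * (ω + Δ)) := by gcongr
    _ ≤ s * M / (ω * lam) := by gcongr

theorem abs_sub_sum_le_sum_erase {ι : Type*} [Fintype ι] [DecidableEq ι] {δ b : ι → ℝ}
    (hb : ∀ j, |δ j| ≤ b j) (i : ι) :
    |δ i - ∑ j, δ j| ≤ ∑ j ∈ univ.erase i, b j := by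
  rw [← Finset.add_sum_erase _ _ (mem_univ i), sub_add_cancel_left, abs_neg]
  exact (Finset.abs_sum_le_sum_abs _ _).trans (Finset.sum_le_sum fun j _ => hb j)

theorem sum_le_sum_sub_add {ι : Type*} [Fintype ι] {f g : ι → ℝ} (h : ∀ j, f j ≤ g j)
    (i : ι) {x : ℝ} (hx : f i ≤ x) : ∑ j, f j ≤ ∑ j, g j - g i + x := by
  classical
  rw [← Finset.add_sum_erase _ f (mem_univ i), ← Finset.add_sum_erase _ g (mem_univ i)]
  linarith [Finset.sum_le_sum fun j (_ : j ∈ univ.erase i) => h j]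

section WeightedPoint

variable {L U lam mu : ℝ}

theorem le_mul_add_mul_div (hlam : 0 ≤ lam) (hsum : 0 < lam + mu) (hLU : L ≤ U) :
    L ≤ (L * mu + U * lam) / (lam + mu) := by
  rw [le_div_iff₀ hsum]
  nlinarith

theorem mul_add_mul_div_sub_le (hsum : 0 < lam + mu) (hle : lam ≤ mu) (hLU : L ≤ U) :
    (L * mu + U * lam) / (lam + mu) - L ≤ U - (L * mu + U * lam) / (lam + mu) := by
  have hL : (L * mu + U * lam) / (lam + mu) - L = lam * (U - L) / (lam + mu) := by
    field_simp
    ring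
  have hU : U - (L * mu + U * lam) / (lam + mu) = mu * (U - L) / (lam + mu) := by
    field_simp
    ring
  rw [hL, hU]
  gcongr

end WeightedPoint

theorem stmt13_general {ι : Type*} [Fintype ι]
    (L U : ι → ℝ) (hLU : ∀ i, L i ≤ U i)
    (lam mu : ℝ) (hlam : lam = ∑ i, L i) (hmu : mu = ∑ i, U i) (hpos : 0 < lam)
    (a : ι → ℝ) (ha : ∀ i, a i = (L i * mu + U i * lam) / (lam + mu))
    (ω : ℝ) (hω : ω = ∑ i, a i)
    (s : ι → ℝ)
    (hs : ∀ i, s i = max ((a i - L i) / (ω - a i + L i)) ((U i - a i) / (ω - a i + U i)))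
    (δ : ι → ℝ) (hδ : ∀ i, L i ≤ a i + δ i ∧ a i + δ i ≤ U i) :
    |(∑ i, 1 / (ω + δ i)) - ((Fintype.card ι : ℝ) - 1) / ω - 1 / (ω + ∑ i, δ i)|
      ≤ (∑ i, s i * (mu - ω - (U i - a i))) / (ω * lam) := by
  classical
  have hle : lam ≤ mu := hlam ▸ hmu ▸ Finset.sum_le_sum fun i _ => hLU i
  have hsum : 0 < lam + mu := by linarith
  have hLa : ∀ i, L i ≤ a i := fun i => ha i ▸ le_mul_add_mul_div hpos.le hsum (hLU i)
  have haU : ∀ i, a i - L i ≤ U i - a i := fun i => ha i ▸ mul_add_mul_div_sub_le hsum hle (hLU i)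
  have hωlam : lam ≤ ω := hlam ▸ hω ▸ Finset.sum_le_sum fun i _ => hLa i
  have hωL : ∀ i, lam ≤ ω - a i + L i := fun i =>
    hlam ▸ hω ▸ sum_le_sum_sub_add hLa i le_rfl
  have hωδ : ∀ i, lam ≤ ω + δ i := fun i => by
    have := hlam ▸ hω ▸ sum_le_sum_sub_add hLa i (hδ i).1
    linarith
  have hωΔ : lam ≤ ω + ∑ i, δ i := by
    rw [hlam, hω, ← Finset.sum_add_distrib]
    exact Finset.sum_le_sum fun i _ => (hδ i).1
  have hδU : ∀ j, |δ j| ≤ U j - a j := fun j =>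
    abs_le.2 ⟨by linarith [(hδ j).1, haU j], by linarith [(hδ j).2]⟩
  have hM : ∀ i, |δ i - ∑ j, δ j| ≤ mu - ω - (U i - a i) := fun i => by
    rw [hmu, hω, ← Finset.sum_sub_distrib, ← Finset.sum_erase_eq_sub (mem_univ i)]
    exact abs_sub_sum_le_sum_erase hδU i
  change |invRemainder ω δ| ≤ _
  rw [invRemainder_eq_sum (by linarith) (fun i => by linarith [hωδ i]) (by linarith),
    Finset.sum_div]
  refine (Finset.abs_sum_le_sum_abs _ _).trans (Finset.sum_le_sum fun i _ => ?_)
  refine abs_remainder_term_le (by linarith) hpos hωΔ (by linarith [hωδ i]) ?_ (hM i)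
  exact hs i ▸ abs_div_add_le_max (by linarith) (by linarith [hωL i]) (hδ i).1 (hδ i).2

/-- Remainder bound for the inversion atom function `g(x) = 1/x` on the
positive domain in interval superposition arithmetic. -/
theorem stmt13 {ι : Type*} [Fintype ι] [Nonempty ι]
    (L U : ι → ℝ) (hLU : ∀ i, L i ≤ U i)
    (lam mu : ℝ) (hlam : lam = ∑ i, L i) (hmu : mu = ∑ i, U i) (hpos : 0 < lam)
    (a : ι → ℝ) (ha : ∀ i, a i = (L i * mu + U i * lam) / (lam + mu))
    (ω : ℝ) (hω : ω = ∑ i, a i)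
    (s : ι → ℝ)
    (hs : ∀ i, s i = max ((a i - L i) / (ω - a i + L i)) ((U i - a i) / (ω - a i + U i)))
    (δ : ι → ℝ) (hδ : ∀ i, L i ≤ a i + δ i ∧ a i + δ i ≤ U i) :
    |(∑ i, 1 / (ω + δ i)) - ((Fintype.card ι : ℝ) - 1) / ω - 1 / (ω + ∑ i, δ i)|
      ≤ (∑ i, s i * (mu - ω - (U i - a i))) / (ω * lam) :=
  stmt13_general L U hLU lam mu hlam hmu hpos a ha ω hω s hs δ hδ
end

section
/- Let n ≥ 1 and L, U ∈ ℝ^n with L_i ≤ U_i for all i and λ = Σ_{i=1}^n L_i > 0; set a_i = (U_i + L_i)/2, s_i = (U_i − L_i)/2, and ω = Σ_{i=1}^n a_i, and assume E := Π_{i=1}^n (ω + s_i) − ω^{n−1}(ω + Σ_{i=1}^n s_i) satisfies E/(ω^{n−1} λ) < 1. Then for every δ ∈ ℝ^n with |δ_i| ≤ s_i for all i, |Σ_{i=1}^n log(ω + δ_i) − (n−1) log(ω) − log(ω + Σ_{i=1}^n δ_i)| ≤ − log( 1 − E/(ω^{n−1} λ) ). -/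
/-!
The sum of logarithms equals `log (P / D)` with `P = ∏ (ω + δ i)` and
`D = ω ^ (n - 1) * (ω + ∑ δ i)`.
The polynomial `∏ (ω + x i) - ω ^ (n - 1) * (ω + ∑ x i)` has only nonnegative coefficients
(it is `∑_{|S| ≥ 2} ω ^ (n - |S|) ∏_{i ∈ S} x i`), so `|P - D|` is bounded by its value `E` at `x = s`.
Since `D ≥ ω ^ (n - 1) * λ`, this gives `|P / D - 1| ≤ T := E / (ω ^ (n - 1) * λ) < 1`, and
`1 - T ≤ P / D ≤ 1 + T ≤ 1 / (1 - T)` bounds the logarithm.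
-/

open Finset

section ProdRemainder

variable {R ι : Type*} [CommRing R]

/-- `ω` times the remainder `∏ (ω + x i) - ω ^ (n - 1) * (ω + ∑ x i)`; the factor `ω` avoids the
exponent `n - 1`, which is truncated at `n = 0`. -/
def prodRemainder (ω : R) (x : ι → R) (t : Finset ι) : R :=
  ω * ∏ i ∈ t, (ω + x i) - ω ^ #t * (ω + ∑ i ∈ t, x i)

lemma prodRemainder_insert [DecidableEq ι] (ω : R) (x : ι → R) {t : Finset ι} {j : ι}
    (hj : j ∉ t) :
    prodRemainder ω x (insert j t) =
      (ω + x j) * prodRemainder ω x t + x j * (ω ^ #t * ∑ i ∈ t, x i) := by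
  rw [prodRemainder, prodRemainder, prod_insert hj, sum_insert hj, card_insert_of_notMem hj]
  ring

variable [LinearOrder R] [IsStrictOrderedRing R]

lemma abs_prodRemainder_le {ω : R} (hω : 0 ≤ ω) {x s : ι → R} (hxs : ∀ i, |x i| ≤ s i)
    (t : Finset ι) : |prodRemainder ω x t| ≤ prodRemainder ω s t := by
  classical
  induction t using Finset.induction_on with
  | empty => simp [prodRemainder]
  | insert j t hj ih =>
    rw [prodRemainder_insert ω x hj, prodRemainder_insert ω s hj]
    have hfactor : |ω + x j| ≤ ω + s j :=
      (abs_add_le _ _).trans (by rw [abs_of_nonneg hω]; exact add_le_add le_rfl (hxs j))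
    have hlinear : |ω ^ #t * ∑ i ∈ t, x i| ≤ ω ^ #t * ∑ i ∈ t, s i := by
      rw [abs_mul, abs_of_nonneg (pow_nonneg hω _)]
      gcongr
      exact (abs_sum_le_sum_abs _ _).trans (sum_le_sum fun i _ => hxs i)
    calc _ ≤ |ω + x j| * |prodRemainder ω x t| + |x j| * |ω ^ #t * ∑ i ∈ t, x i| :=
          (abs_add_le _ _).trans_eq (by rw [abs_mul, abs_mul])
      _ ≤ _ := add_le_add
          (mul_le_mul hfactor ih (abs_nonneg _) ((abs_nonneg _).trans hfactor))
          (mul_le_mul (hxs j) hlinear (abs_nonneg _) ((abs_nonneg _).trans (hxs j)))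

lemma abs_prod_add_sub_le [Fintype ι] [Nonempty ι] {ω : R} (hω : 0 < ω) {x s : ι → R}
    (hxs : ∀ i, |x i| ≤ s i) :
    |∏ i, (ω + x i) - ω ^ (Fintype.card ι - 1) * (ω + ∑ i, x i)| ≤
      ∏ i, (ω + s i) - ω ^ (Fintype.card ι - 1) * (ω + ∑ i, s i) := by
  obtain ⟨k, hk⟩ : ∃ k, Fintype.card ι = k + 1 :=
    Nat.exists_eq_succ_of_ne_zero Fintype.card_ne_zero
  have hunfold (y : ι → R) : prodRemainder ω y univ =
      ω * (∏ i, (ω + y i) - ω ^ (Fintype.card ι - 1) * (ω + ∑ i, y i)) := by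
    rw [prodRemainder, card_univ, hk, Nat.add_sub_cancel, pow_succ]
    ring
  have key := abs_prodRemainder_le hω.le hxs univ
  rw [hunfold, hunfold, abs_mul, abs_of_pos hω] at key
  exact le_of_mul_le_mul_left key hω

end ProdRemainder

lemma neg_sum_le_sum_of_abs_le {ι : Type*} [Fintype ι] {δ s : ι → ℝ} (hδ : ∀ i, |δ i| ≤ s i)
    (t : Finset ι) : -∑ i, s i ≤ ∑ i ∈ t, δ i := by
  have hs : ∀ i, 0 ≤ s i := fun i => (abs_nonneg _).trans (hδ i)
  calc -∑ i, s i ≤ -∑ i ∈ t, s i :=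
        neg_le_neg (sum_le_sum_of_subset_of_nonneg (subset_univ t) fun i _ _ => hs i)
    _ = ∑ i ∈ t, -s i := (sum_neg_distrib _).symm
    _ ≤ ∑ i ∈ t, δ i := sum_le_sum fun i _ => neg_le_of_abs_le (hδ i)

lemma abs_log_le_neg_log_one_sub {x T : ℝ} (hx : |x - 1| ≤ T) (hT : T < 1) :
    |Real.log x| ≤ -Real.log (1 - T) := by
  obtain ⟨hlo, hhi⟩ := abs_le.mp hx
  have h1T : 0 < 1 - T := by linarith
  rw [abs_le, neg_neg, ← Real.log_inv]
  refine ⟨Real.log_le_log h1T (by linarith), Real.log_le_log (by linarith) ?_⟩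
  rw [← one_div, le_div_iff₀ h1T]
  nlinarith

theorem stmt14_general {ι : Type*} [Fintype ι] [Nonempty ι]
    (L U : ι → ℝ)
    (lam : ℝ) (hlam : lam = ∑ i, L i) (hpos : 0 < lam)
    (a s : ι → ℝ)
    (ha : ∀ i, a i = (U i + L i) / 2) (hs : ∀ i, s i = (U i - L i) / 2)
    (ω : ℝ) (hω : ω = ∑ i, a i)
    (E : ℝ)
    (hE : E = (∏ i, (ω + s i)) - ω ^ (Fintype.card ι - 1) * (ω + ∑ i, s i))
    (hE1 : E / (ω ^ (Fintype.card ι - 1) * lam) < 1)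
    (δ : ι → ℝ) (hδ : ∀ i, |δ i| ≤ s i) :
    |(∑ i, Real.log (ω + δ i)) - ((Fintype.card ι : ℝ) - 1) * Real.log ω
        - Real.log (ω + ∑ i, δ i)|
      ≤ - Real.log (1 - E / (ω ^ (Fintype.card ι - 1) * lam)) := by
  have hω_eq : ω = lam + ∑ i, s i := by
    rw [hω, hlam, ← sum_add_distrib]
    exact sum_congr rfl fun i _ => by rw [ha, hs]; ring
  have hωpos : 0 < ω := by
    linarith [sum_nonneg fun i (_ : i ∈ univ) => (abs_nonneg (δ i)).trans (hδ i)]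
  have hfactor (i : ι) : lam ≤ ω + δ i := by
    linarith [neg_sum_le_sum_of_abs_le hδ {i}, sum_singleton δ i]
  have hsum : lam ≤ ω + ∑ i, δ i := by linarith [neg_sum_le_sum_of_abs_le hδ univ]
  set k := Fintype.card ι - 1
  set P := ∏ i, (ω + δ i)
  set D := ω ^ k * (ω + ∑ i, δ i)
  have hP : 0 < P := prod_pos fun i _ => hpos.trans_le (hfactor i)
  have hD : ω ^ k * lam ≤ D := mul_le_mul_of_nonneg_left hsum (by positivity)
  have hD0 : 0 < D := (by positivity : 0 < ω ^ k * lam).trans_le hD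
  have hlog : (∑ i, Real.log (ω + δ i)) - ((Fintype.card ι : ℝ) - 1) * Real.log ω
      - Real.log (ω + ∑ i, δ i) = Real.log (P / D) := by
    rw [← Real.log_prod fun i _ => (hpos.trans_le (hfactor i)).ne', Real.log_div hP.ne' hD0.ne',
      Real.log_mul (by positivity) (hpos.trans_le hsum).ne', Real.log_pow,
      Nat.cast_pred Fintype.card_pos]
    ring
  have hratio : |P / D - 1| ≤ E / (ω ^ k * lam) := by
    have hPD : |P - D| ≤ E := hE ▸ abs_prod_add_sub_le hωpos hδ
    rw [div_sub_one hD0.ne', abs_div, abs_of_pos hD0]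
    exact div_le_div₀ ((abs_nonneg _).trans hPD) hPD (by positivity) hD
  rw [hlog]
  exact abs_log_le_neg_log_one_sub hratio hE1

/-- Remainder bound for the logarithm atom function `g(x) = log x` on the
positive domain in interval superposition arithmetic. -/
theorem stmt14 {ι : Type*} [Fintype ι] [Nonempty ι]
    (L U : ι → ℝ) (hLU : ∀ i, L i ≤ U i)
    (lam : ℝ) (hlam : lam = ∑ i, L i) (hpos : 0 < lam)
    (a s : ι → ℝ)
    (ha : ∀ i, a i = (U i + L i) / 2) (hs : ∀ i, s i = (U i - L i) / 2)
    (ω : ℝ) (hω : ω = ∑ i, a i)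
    (E : ℝ)
    (hE : E = (∏ i, (ω + s i)) - ω ^ (Fintype.card ι - 1) * (ω + ∑ i, s i))
    (hE1 : E / (ω ^ (Fintype.card ι - 1) * lam) < 1)
    (δ : ι → ℝ) (hδ : ∀ i, |δ i| ≤ s i) :
    |(∑ i, Real.log (ω + δ i)) - ((Fintype.card ι : ℝ) - 1) * Real.log ω
        - Real.log (ω + ∑ i, δ i)|
      ≤ - Real.log (1 - E / (ω ^ (Fintype.card ι - 1) * lam)) :=
  stmt14_general L U lam hlam hpos a s ha hs ω hω E hE hE1 δ hδ
end

section
/- Let n ≥ 1 and let δ, s ∈ ℝ^n satisfy 2|sin(δ_k/2)| ≤ s_k for all k. Then |Σ_{k=1}^n cos(δ_k) − cos(Σ_{k=1}^n δ_k) − (n−1)| ≤ Π_{k=1}^n (1 + s_k) − Σ_{k=1}^n s_k − 1. -/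
/-! With `z k = exp (δ k * I)`, the left-hand side is the real part of
`∑ z k - ∏ z k - (n - 1)` and `‖z k - 1‖ = 2 |sin (δ k / 2)|`. Writing `z k = 1 + w k`, that
quantity is minus the part of `∏ (1 + w k)` of degree at least two in the `w k`, whose norm is
bounded, one factor at a time, by the same part of `∏ (1 + s k)`. -/

open Finset

section NormedRing

variable {ι R : Type*} [SeminormedCommRing R] [NormOneClass R]

lemma Finset.norm_prod_one_add_sub_one_sub_sum_le (t : Finset ι) {f : ι → R} {g : ι → ℝ}
    (h : ∀ i ∈ t, ‖f i‖ ≤ g i) :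
    ‖∏ i ∈ t, (1 + f i) - 1 - ∑ i ∈ t, f i‖ ≤ ∏ i ∈ t, (1 + g i) - 1 - ∑ i ∈ t, g i := by
  classical
  induction t using Finset.induction_on with
  | empty => simp
  | insert a t ha ih =>
    have hat : ∀ i ∈ t, ‖f i‖ ≤ g i := fun i hi => h i (mem_insert_of_mem hi)
    have hfa : ‖f a‖ ≤ g a := h a (mem_insert_self a t)
    have hga : 0 ≤ g a := (norm_nonneg _).trans hfa
    have h1 : ‖1 + f a‖ ≤ 1 + g a := (norm_add_le _ _).trans (by rw [norm_one]; linarith)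
    have hsum : ‖∑ i ∈ t, f i‖ ≤ ∑ i ∈ t, g i := (norm_sum_le _ _).trans (sum_le_sum hat)
    rw [prod_insert ha, sum_insert ha, prod_insert ha, sum_insert ha]
    calc ‖(1 + f a) * ∏ i ∈ t, (1 + f i) - 1 - (f a + ∑ i ∈ t, f i)‖
        = ‖(1 + f a) * (∏ i ∈ t, (1 + f i) - 1 - ∑ i ∈ t, f i) + f a * ∑ i ∈ t, f i‖ := by
          congr 1; ring
      _ ≤ ‖1 + f a‖ * ‖∏ i ∈ t, (1 + f i) - 1 - ∑ i ∈ t, f i‖ + ‖f a‖ * ‖∑ i ∈ t, f i‖ :=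
          norm_add_le_of_le (norm_mul_le _ _) (norm_mul_le _ _)
      _ ≤ (1 + g a) * (∏ i ∈ t, (1 + g i) - 1 - ∑ i ∈ t, g i) + g a * ∑ i ∈ t, g i := by
          gcongr
          exact ih hat
      _ = (1 + g a) * ∏ i ∈ t, (1 + g i) - 1 - (g a + ∑ i ∈ t, g i) := by ring

lemma Finset.norm_sum_sub_prod_sub_card_le (t : Finset ι) {z : ι → R} {s : ι → ℝ}
    (h : ∀ i ∈ t, ‖z i - 1‖ ≤ s i) :
    ‖∑ i ∈ t, z i - ∏ i ∈ t, z i - ((#t : R) - 1)‖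
      ≤ ∏ i ∈ t, (1 + s i) - ∑ i ∈ t, s i - 1 := by
  have key := t.norm_prod_one_add_sub_one_sub_sum_le h
  simp only [add_sub_cancel, sum_sub_distrib, sum_const, nsmul_one] at key
  have hneg : ∑ i ∈ t, z i - ∏ i ∈ t, z i - ((#t : R) - 1)
      = -(∏ i ∈ t, z i - 1 - (∑ i ∈ t, z i - #t)) := by ring
  rw [hneg, norm_neg]
  linarith

end NormedRing

theorem stmt15_general {ι : Type*} [Fintype ι]
    (δ s : ι → ℝ) (hδs : ∀ k, 2 * |Real.sin (δ k / 2)| ≤ s k) :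
    |(∑ k, Real.cos (δ k)) - Real.cos (∑ k, δ k) - ((Fintype.card ι : ℝ) - 1)|
      ≤ (∏ k, (1 + s k)) - (∑ k, s k) - 1 := by
  set z : ι → ℂ := fun k => Complex.exp (δ k * Complex.I)
  have hz : ∀ k ∈ univ, ‖z k - 1‖ ≤ s k := fun k _ => by
    simpa [z, mul_comm _ Complex.I, Complex.norm_exp_I_mul_ofReal_sub_one] using hδs k
  have hprod : ∏ k, z k = Complex.exp ((∑ k, δ k : ℝ) * Complex.I) := by
    simp only [z, ← Complex.exp_sum, Complex.ofReal_sum, sum_mul]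
  have hre : (∑ k, z k - ∏ k, z k - ((#(univ : Finset ι) : ℂ) - 1)).re
      = (∑ k, Real.cos (δ k)) - Real.cos (∑ k, δ k) - ((Fintype.card ι : ℝ) - 1) := by
    simp only [hprod, z, Complex.sub_re, Complex.re_sum, Complex.exp_ofReal_mul_I_re,
      Complex.natCast_re, Complex.one_re, card_univ]
  rw [← hre]
  exact (Complex.abs_re_le_norm _).trans (univ.norm_sum_sub_prod_sub_card_le hz)

/-- Intermediate cosine estimate in the derivation of the sine and cosine
remainder bounds of interval superposition arithmetic. -/
theorem stmt15 {ι : Type*} [Fintype ι] [Nonempty ι]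
    (δ s : ι → ℝ) (hδs : ∀ k, 2 * |Real.sin (δ k / 2)| ≤ s k) :
    |(∑ k, Real.cos (δ k)) - Real.cos (∑ k, δ k) - ((Fintype.card ι : ℝ) - 1)|
      ≤ (∏ k, (1 + s k)) - (∑ k, s k) - 1 :=
  stmt15_general δ s hδs
end

section
/- Let n ≥ 1 and let δ, s ∈ ℝ^n satisfy 2|sin(δ_k/2)| ≤ s_k for all k. Then |Σ_{k=1}^n sin(δ_k) − sin(Σ_{k=1}^n δ_k)| ≤ Π_{k=1}^n (1 + s_k) − Σ_{k=1}^n s_k − 1. -/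
/-!
Put `z k = exp (i δ k)`, so that `‖z k - 1‖ = 2 |sin (δ k / 2)| ≤ s k` and `∏ z k = exp (i ∑ δ k)`.
The imaginary part of `∏ z k - 1 - ∑ (z k - 1)` is `sin (∑ δ k) - ∑ sin (δ k)`, and expanding the
product in the `z k - 1` bounds its norm by the same expression with every `z k - 1` replaced by
`s k`, namely `∏ (1 + s k) - 1 - ∑ s k`.
-/

open Finset

section ProductBounds

variable {ι R : Type*} [SeminormedCommRing R] {S : Finset ι} {z : ι → R} {s : ι → ℝ}

theorem Finset.norm_prod_sub_one_le (hz : ∀ k ∈ S, ‖z k - 1‖ ≤ s k) :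
    ‖∏ k ∈ S, z k - 1‖ ≤ ∏ k ∈ S, (1 + s k) - 1 := by
  classical
  induction S using Finset.induction_on with
  | empty => simp
  | @insert a S ha ih =>
    have hza := hz a (mem_insert_self a S)
    have hP := ih fun k hk => hz k (mem_insert_of_mem hk)
    rw [prod_insert ha, prod_insert ha]
    calc ‖z a * ∏ k ∈ S, z k - 1‖
        = ‖(z a - 1) * (∏ k ∈ S, z k - 1) + (z a - 1) + (∏ k ∈ S, z k - 1)‖ := by ring_nf
      _ ≤ ‖z a - 1‖ * ‖∏ k ∈ S, z k - 1‖ + ‖z a - 1‖ + ‖∏ k ∈ S, z k - 1‖ :=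
          (norm_add₃_le).trans (by gcongr; exact norm_mul_le _ _)
      _ ≤ s a * (∏ k ∈ S, (1 + s k) - 1) + s a + (∏ k ∈ S, (1 + s k) - 1) := by
          gcongr
          exact (norm_nonneg _).trans hza
      _ = (1 + s a) * ∏ k ∈ S, (1 + s k) - 1 := by ring

theorem Finset.norm_prod_sub_one_sub_sum_le (hz : ∀ k ∈ S, ‖z k - 1‖ ≤ s k) :
    ‖∏ k ∈ S, z k - 1 - ∑ k ∈ S, (z k - 1)‖ ≤ ∏ k ∈ S, (1 + s k) - 1 - ∑ k ∈ S, s k := by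
  classical
  induction S using Finset.induction_on with
  | empty => simp
  | @insert a S ha ih =>
    have hza := hz a (mem_insert_self a S)
    have hzS : ∀ k ∈ S, ‖z k - 1‖ ≤ s k := fun k hk => hz k (mem_insert_of_mem hk)
    rw [prod_insert ha, prod_insert ha, sum_insert ha, sum_insert ha]
    calc ‖z a * ∏ k ∈ S, z k - 1 - (z a - 1 + ∑ k ∈ S, (z k - 1))‖
        = ‖(z a - 1) * (∏ k ∈ S, z k - 1) + (∏ k ∈ S, z k - 1 - ∑ k ∈ S, (z k - 1))‖ := by
          ring_nf
      _ ≤ ‖z a - 1‖ * ‖∏ k ∈ S, z k - 1‖ + ‖∏ k ∈ S, z k - 1 - ∑ k ∈ S, (z k - 1)‖ :=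
          (norm_add_le _ _).trans (by gcongr; exact norm_mul_le _ _)
      _ ≤ s a * (∏ k ∈ S, (1 + s k) - 1) + (∏ k ∈ S, (1 + s k) - 1 - ∑ k ∈ S, s k) := by
          gcongr
          · exact (norm_nonneg _).trans hza
          · exact S.norm_prod_sub_one_le hzS
          · exact ih hzS
      _ = (1 + s a) * ∏ k ∈ S, (1 + s k) - 1 - (s a + ∑ k ∈ S, s k) := by ring

end ProductBounds

theorem Complex.im_prod_exp_sub_one_sub_sum {ι : Type*} (S : Finset ι) (δ : ι → ℝ) :
    (∏ k ∈ S, exp (I * δ k) - 1 - ∑ k ∈ S, (exp (I * δ k) - 1)).im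
      = Real.sin (∑ k ∈ S, δ k) - ∑ k ∈ S, Real.sin (δ k) := by
  rw [← exp_sum, ← mul_sum, ← ofReal_sum]
  simp only [sub_im, im_sum, one_im, mul_comm I, exp_ofReal_mul_I_im, sub_zero]

theorem stmt16_general {ι : Type*} [Fintype ι]
    (δ s : ι → ℝ) (hδs : ∀ k, 2 * |Real.sin (δ k / 2)| ≤ s k) :
    |(∑ k, Real.sin (δ k)) - Real.sin (∑ k, δ k)|
      ≤ (∏ k, (1 + s k)) - (∑ k, s k) - 1 := by
  have hz : ∀ k ∈ univ, ‖Complex.exp (Complex.I * δ k) - 1‖ ≤ s k := fun k _ => by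
    simpa [Complex.norm_exp_I_mul_ofReal_sub_one, abs_mul] using hδs k
  calc |(∑ k, Real.sin (δ k)) - Real.sin (∑ k, δ k)|
      = |(∏ k, Complex.exp (Complex.I * δ k) - 1
          - ∑ k, (Complex.exp (Complex.I * δ k) - 1)).im| := by
        rw [Complex.im_prod_exp_sub_one_sub_sum, abs_sub_comm]
    _ ≤ ‖∏ k, Complex.exp (Complex.I * δ k) - 1 - ∑ k, (Complex.exp (Complex.I * δ k) - 1)‖ :=
        Complex.abs_im_le_norm _
    _ ≤ (∏ k, (1 + s k)) - (∑ k, s k) - 1 := by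
        linarith [univ.norm_prod_sub_one_sub_sum_le hz]

/-- Intermediate sine estimate in the derivation of the sine and cosine
remainder bounds of interval superposition arithmetic. -/
theorem stmt16 {ι : Type*} [Fintype ι] [Nonempty ι]
    (δ s : ι → ℝ) (hδs : ∀ k, 2 * |Real.sin (δ k / 2)| ≤ s k) :
    |(∑ k, Real.sin (δ k)) - Real.sin (∑ k, δ k)|
      ≤ (∏ k, (1 + s k)) - (∑ k, s k) - 1 :=
  stmt16_general δ s hδs
end

section
/- Let n ≥ 1 and δ_1,…,δ_n ∈ ℝ be such that cos(δ_i) ≠ 0 for all i ∈ {1,…,n} and cos(Σ_{k=1}^i δ_k) ≠ 0 for all i ∈ {1,…,n}. Then tan(Σ_{i=1}^n δ_i) − Σ_{i=1}^n tan(δ_i) = Σ_{i=1}^{n−1} tan(δ_{i+1}) · tan(Σ_{k=1}^{i} δ_k) · tan(Σ_{k=1}^{i+1} δ_k). -/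
open Finset

theorem Real.tan_add_sub_tan_sub_tan {a b : ℝ} (ha : Real.cos a ≠ 0) (hb : Real.cos b ≠ 0)
    (hab : Real.cos (a + b) ≠ 0) :
    Real.tan (a + b) - Real.tan a - Real.tan b = Real.tan a * Real.tan b * Real.tan (a + b) := by
  simp only [Real.tan_eq_sin_div_cos]
  field_simp
  rw [Real.sin_add, Real.cos_add]
  ring

theorem Real.tan_sum_range_succ_sub_sum_tan (δ : ℕ → ℝ) {n : ℕ}
    (hcos : ∀ i ≤ n, Real.cos (δ i) ≠ 0)
    (hcossum : ∀ i ≤ n, Real.cos (∑ k ∈ range (i + 1), δ k) ≠ 0) :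
    Real.tan (∑ k ∈ range (n + 1), δ k) - ∑ i ∈ range (n + 1), Real.tan (δ i)
      = ∑ i ∈ range n,
          Real.tan (δ (i + 1)) * Real.tan (∑ k ∈ range (i + 1), δ k)
            * Real.tan (∑ k ∈ range (i + 2), δ k) := by
  induction n with
  | zero => simp
  | succ n ih =>
    have ih := ih (fun i hi => hcos i (by omega)) (fun i hi => hcossum i (by omega))
    have hsum : ∑ k ∈ range (n + 2), δ k = ∑ k ∈ range (n + 1), δ k + δ (n + 1) :=
      sum_range_succ δ (n + 1)
    have hstep := Real.tan_add_sub_tan_sub_tan (hcossum n (by omega)) (hcos (n + 1) le_rfl)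
      (hsum ▸ hcossum (n + 1) le_rfl)
    rw [hsum, sum_range_succ (fun i => Real.tan (δ i)) (n + 1),
      sum_range_succ (fun i => _ * _ * _) n, hsum, ← ih]
    linarith

theorem stmt19_general (n : ℕ) (δ : ℕ → ℝ)
    (hcos : ∀ i < n, Real.cos (δ i) ≠ 0)
    (hcossum : ∀ i, 1 ≤ i → i ≤ n → Real.cos (∑ k ∈ Finset.range i, δ k) ≠ 0) :
    Real.tan (∑ k ∈ Finset.range n, δ k) - ∑ i ∈ Finset.range n, Real.tan (δ i)
      = ∑ i ∈ Finset.range (n - 1),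
          Real.tan (δ (i + 1)) * Real.tan (∑ k ∈ Finset.range (i + 1), δ k)
            * Real.tan (∑ k ∈ Finset.range (i + 2), δ k) := by
  cases n with
  | zero => simp
  | succ n =>
    exact Real.tan_sum_range_succ_sub_sum_tan δ (fun i hi => hcos i (by omega))
      (fun i hi => hcossum (i + 1) (by omega) (by omega))

/-- Generalized difference form of the tangent addition theorem: with
`δ 0, …, δ (n-1)` playing the role of `δ_1, …, δ_n`,
`tan(∑_{i=1}^n δ_i) - ∑_{i=1}^n tan(δ_i)
  = ∑_{i=1}^{n-1} tan(δ_{i+1}) tan(∑_{k=1}^i δ_k) tan(∑_{k=1}^{i+1} δ_k)`,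
provided all the tangents involved are defined. -/
theorem stmt19 (n : ℕ) (hn : 1 ≤ n) (δ : ℕ → ℝ)
    (hcos : ∀ i < n, Real.cos (δ i) ≠ 0)
    (hcossum : ∀ i, 1 ≤ i → i ≤ n → Real.cos (∑ k ∈ Finset.range i, δ k) ≠ 0) :
    Real.tan (∑ k ∈ Finset.range n, δ k) - ∑ i ∈ Finset.range n, Real.tan (δ i)
      = ∑ i ∈ Finset.range (n - 1),
          Real.tan (δ (i + 1)) * Real.tan (∑ k ∈ Finset.range (i + 1), δ k)
            * Real.tan (∑ k ∈ Finset.range (i + 2), δ k) :=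
  stmt19_general n δ hcos hcossum
end
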